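/- Let f = a_0 e - ∑_{i=1}^∞ a_i U^{-i}e with a_0 = 1, a_i ≥ 0, ∑_{i=1}^∞ a_i = 1, over an orthonormal martingale difference sequence (U^i e). Then the sequence σ_n = ‖S_n(f)‖₂ is nondecreasing: σ_n ≤ σ_{n+1} for all n ≥ 1. -/

import Mathlib

open MeasureTheory Filter Finset

/-- The `ℤ`-power of a measurable equivalence `T`, i.e. `T^i`. -/
noncomputable def measIter {Ω : Type*} [MeasurableSpace Ω] (T : Ω ≃ᵐ Ω) : ℤ → Ω → Ω :=
  fun i => if 0 ≤ i then (⇑T)^[i.toNat] else (⇑T.symm)^[(-i).toNat]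

/-!
Write `g_N = a₀ e - ∑_{i=1}^N a_i U^{-i} e` for the truncations of `f`. The Birkhoff sum
`S_m g_N` is the finite combination `∑_u c_{m,u} U^u e` with `c_{m,u} = ∑_{j<m} a'_{j-u}`
(`a'_0 = a₀`, `a'_k = -a_k`), so by orthogonality `‖S_m g_N‖² = ‖e‖² ∑_u c_{m,u}²`.
Passing from `m` to `m + 1` shifts the coefficients with `u ≥ 0` by one place and adds a new
one at `u = 0`, while each coefficient with `u < 0`, a sum of the nonpositive `-a_k`, only becomes
more negative. Hence `‖S_m g_N‖ ≤ ‖S_{m+1} g_N‖`, and letting `N → ∞` gives the claim because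
`S_m` is bounded on `L²`.
-/

open scoped ENNReal Topology

section L2

variable {Ω : Type*} [MeasurableSpace Ω] {μ : Measure Ω}

theorem MeasureTheory.MeasurePreserving.integral_comp_of_aestronglyMeasurable {E : Type*}
    [NormedAddCommGroup E] [NormedSpace ℝ E] {φ : Ω → Ω} (hφ : MeasurePreserving φ μ μ)
    {g : Ω → E} (hg : AEStronglyMeasurable g μ) : ∫ ω, g (φ ω) ∂μ = ∫ ω, g ω ∂μ := by
  rw [← integral_map hφ.aemeasurable (by rwa [hφ.map_eq]), hφ.map_eq]

theorem integral_sq_sum_mul_of_orthogonal {ι : Type*} {g : ι → Ω → ℝ}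
    (hg : ∀ i, MemLp (g i) 2 μ) (horth : Pairwise fun i j => ∫ ω, g i ω * g j ω ∂μ = 0)
    (c : ι → ℝ) (s : Finset ι) :
    ∫ ω, (∑ i ∈ s, c i * g i ω) ^ 2 ∂μ = ∑ i ∈ s, c i ^ 2 * ∫ ω, g i ω ^ 2 ∂μ := by
  have hint : ∀ i j, Integrable (fun ω => g i ω * g j ω) μ :=
    fun i j => (hg i).integrable_mul (hg j)
  calc ∫ ω, (∑ i ∈ s, c i * g i ω) ^ 2 ∂μ
      = ∫ ω, ∑ i ∈ s, ∑ j ∈ s, c i * c j * (g i ω * g j ω) ∂μ := by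
        simp_rw [sq, sum_mul_sum, mul_mul_mul_comm]
    _ = ∑ i ∈ s, ∑ j ∈ s, c i * c j * ∫ ω, g i ω * g j ω ∂μ := by
        rw [integral_finsetSum _ fun i _ => integrable_finsetSum _ fun j _ =>
          (hint i j).const_mul _]
        refine sum_congr rfl fun i _ => ?_
        rw [integral_finsetSum _ fun j _ => (hint i j).const_mul _]
        simp_rw [integral_const_mul]
    _ = ∑ i ∈ s, c i ^ 2 * ∫ ω, g i ω ^ 2 ∂μ := by
        refine sum_congr rfl fun i hi => ?_
        rw [sum_eq_single_of_mem i hi fun j _ hji => by rw [horth hji.symm, mul_zero]]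
        simp_rw [sq]

theorem integral_sq_eq_norm_toLp_sq {v : Ω → ℝ} (hv : MemLp v 2 μ) :
    ∫ ω, v ω ^ 2 ∂μ = ‖hv.toLp v‖ ^ 2 := by
  rw [← real_inner_self_eq_norm_sq, L2.inner_def]
  refine integral_congr_ae ?_
  filter_upwards [hv.coeFn_toLp] with ω hω
  simp [hω, sq]

theorem tendsto_integral_sq_of_tendsto_eLpNorm_sub {ι : Type*} {l : Filter ι}
    {u : ι → Ω → ℝ} {v : Ω → ℝ} (hu : ∀ i, MemLp (u i) 2 μ) (hv : MemLp v 2 μ)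
    (h : Tendsto (fun i => eLpNorm (u i - v) 2 μ) l (𝓝 0)) :
    Tendsto (fun i => ∫ ω, u i ω ^ 2 ∂μ) l (𝓝 (∫ ω, v ω ^ 2 ∂μ)) := by
  simp_rw [integral_sq_eq_norm_toLp_sq (hu _), integral_sq_eq_norm_toLp_sq hv]
  exact ((Lp.tendsto_Lp_iff_tendsto_eLpNorm'' u hu v hv).2 h).norm.pow 2

end L2

theorem birkhoffSum_eq_sum_comp_iterate {α M : Type*} [AddCommMonoid M] (T : α → α) (g : α → M)
    (n : ℕ) : birkhoffSum T g n = ∑ k ∈ range n, g ∘ T^[k] := by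
  ext ω; simp [birkhoffSum]

section Birkhoff

variable {Ω : Type*} [MeasurableSpace Ω] {μ : Measure Ω} {T : Ω → Ω}

theorem MeasureTheory.MemLp.birkhoffSum {p : ℝ≥0∞} {g : Ω → ℝ} (hg : MemLp g p μ)
    (hT : MeasurePreserving T μ μ) (n : ℕ) :
    MemLp (birkhoffSum T g n) p μ := by
  rw [birkhoffSum_eq_sum_comp_iterate]
  exact memLp_finsetSum' _ fun k _ => hg.comp_measurePreserving (hT.iterate k)

theorem eLpNorm_birkhoffSum_le {p : ℝ≥0∞} (hp : 1 ≤ p) {g : Ω → ℝ}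
    (hg : AEStronglyMeasurable g μ) (hT : MeasurePreserving T μ μ) (n : ℕ) :
    eLpNorm (birkhoffSum T g n) p μ ≤ n * eLpNorm g p μ := by
  rw [birkhoffSum_eq_sum_comp_iterate]
  calc eLpNorm (∑ k ∈ range n, g ∘ T^[k]) p μ ≤ ∑ k ∈ range n, eLpNorm (g ∘ T^[k]) p μ :=
        eLpNorm_sum_le (fun k _ => hg.comp_measurePreserving (hT.iterate k)) hp
    _ = n * eLpNorm g p μ := by
        simp [eLpNorm_comp_measurePreserving hg (hT.iterate _)]

theorem tendsto_integral_sq_birkhoffSum {ι : Type*} {l : Filter ι} {g : ι → Ω → ℝ}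
    {f : Ω → ℝ} (hT : MeasurePreserving T μ μ) (hg : ∀ i, MemLp (g i) 2 μ) (hf : MemLp f 2 μ)
    (h : Tendsto (fun i => eLpNorm (f - g i) 2 μ) l (𝓝 0)) (n : ℕ) :
    Tendsto (fun i => ∫ ω, birkhoffSum T (g i) n ω ^ 2 ∂μ) l
      (𝓝 (∫ ω, birkhoffSum T f n ω ^ 2 ∂μ)) := by
  refine tendsto_integral_sq_of_tendsto_eLpNorm_sub (fun i => (hg i).birkhoffSum hT n)
    (hf.birkhoffSum hT n) ?_
  have hbound : ∀ i, eLpNorm (birkhoffSum T (g i) n - birkhoffSum T f n) 2 μ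
      ≤ n * eLpNorm (f - g i) 2 μ := fun i => by
    have hsub : birkhoffSum T (g i) n - birkhoffSum T f n = birkhoffSum T (g i - f) n :=
      funext fun ω => (birkhoffSum_sub T (g i) f n ω).symm
    rw [hsub, eLpNorm_sub_comm f]
    exact eLpNorm_birkhoffSum_le one_le_two ((hg i).sub hf).1 hT n
  have hlim : Tendsto (fun i => (n : ℝ≥0∞) * eLpNorm (f - g i) 2 μ) l (𝓝 0) := by
    simpa using ENNReal.Tendsto.const_mul h (Or.inr (ENNReal.natCast_ne_top n))
  exact tendsto_of_tendsto_of_tendsto_of_le_of_le tendsto_const_nhds hlim (fun _ => zero_le)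
    hbound

end Birkhoff

section Coefficients

variable {R : Type*}

/-- The coefficient of `U^u e` in `S_m (∑_k α_k U^{-k} e)`. -/
def birkhoffCoeff [AddCommMonoid R] (α : ℤ → R) (m : ℕ) (u : ℤ) : R :=
  ∑ j ∈ range m, α (j - u)

theorem sum_range_sum_mul_eq_sum_birkhoffCoeff_mul [Semiring R] {α : ℤ → R} (E : ℤ → R)
    {t s : Finset ℤ} {m : ℕ} (hα : ∀ k ∉ t, α k = 0)
    (hs : ∀ j < m, ∀ k ∈ t, (j : ℤ) - k ∈ s) :
    ∑ j ∈ range m, ∑ k ∈ t, α k * E (j - k) = ∑ u ∈ s, birkhoffCoeff α m u * E u := by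
  simp_rw [birkhoffCoeff, sum_mul]
  conv_rhs => rw [sum_comm]
  refine sum_congr rfl fun j hj => ?_
  have himage : ∑ k ∈ t, α k * E (j - k) = ∑ u ∈ t.image ((j : ℤ) - ·), α (j - u) * E u := by
    rw [sum_image fun _ _ _ _ h => sub_right_injective h]
    simp
  rw [himage]
  refine sum_subset (image_subset_iff.2 (hs j (mem_range.1 hj))) fun u _ hu => ?_
  rw [hα, zero_mul]
  exact fun hk => hu (mem_image.2 ⟨_, hk, sub_sub_cancel _ _⟩)

variable {α : ℤ → ℝ}

theorem birkhoffCoeff_succ_add_one (hα : ∀ k < 0, α k = 0) (m : ℕ) {u : ℤ} (hu : 0 ≤ u) :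
    birkhoffCoeff α (m + 1) (u + 1) = birkhoffCoeff α m u := by
  rw [birkhoffCoeff, sum_range_succ', Nat.cast_zero, hα _ (by omega), add_zero]
  refine sum_congr rfl fun j _ => ?_
  push_cast
  ring_nf

theorem sq_birkhoffCoeff_le_succ (hα : ∀ k, 0 < k → α k ≤ 0) (m : ℕ) {u : ℤ} (hu : u < 0) :
    birkhoffCoeff α m u ^ 2 ≤ birkhoffCoeff α (m + 1) u ^ 2 := by
  have hnonpos : birkhoffCoeff α m u ≤ 0 := sum_nonpos fun j _ => hα _ (by omega)
  have hstep : α (m - u) ≤ 0 := hα _ (by omega)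
  have hsucc : birkhoffCoeff α (m + 1) u = birkhoffCoeff α m u + α (m - u) := sum_range_succ _ _
  rw [hsucc]
  nlinarith

theorem sum_sq_birkhoffCoeff_le_succ (hneg : ∀ k < 0, α k = 0) (hpos : ∀ k, 0 < k → α k ≤ 0)
    (N m : ℕ) :
    ∑ u ∈ Ico (-N : ℤ) m, birkhoffCoeff α m u ^ 2
      ≤ ∑ u ∈ Ico (-N : ℤ) (m + 1), birkhoffCoeff α (m + 1) u ^ 2 := by
  have hsplit : ∀ b : ℤ, 0 ≤ b → ∀ F : ℤ → ℝ,
      ∑ u ∈ Ico (-N : ℤ) b, F u = ∑ u ∈ Ico (-N : ℤ) 0, F u + ∑ u ∈ Ico (0 : ℤ) b, F u :=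
    fun b hb F => by
      rw [← sum_union (Ico_disjoint_Ico_consecutive _ _ _),
        Ico_union_Ico_eq_Ico (by omega) (by omega)]
  have hshift : ∑ u ∈ Ico (0 : ℤ) (m + 1), birkhoffCoeff α (m + 1) u ^ 2
      = birkhoffCoeff α (m + 1) 0 ^ 2 + ∑ u ∈ Ico (0 : ℤ) m, birkhoffCoeff α m u ^ 2 := by
    have hIco := sum_Ico_add' (fun u => birkhoffCoeff α (m + 1) u ^ 2) 0 (m : ℤ) 1
    rw [zero_add] at hIco
    rw [← insert_Ico_add_one_left_eq_Ico (by omega), sum_insert (by simp), zero_add, ← hIco]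
    congr 1
    refine sum_congr rfl fun u hu => ?_
    rw [birkhoffCoeff_succ_add_one hneg m (mem_Ico.1 hu).1]
  rw [hsplit m (by omega), hsplit (m + 1) (by omega), hshift, ← add_assoc]
  refine add_le_add_left (le_add_of_le_of_nonneg (sum_le_sum fun u hu => ?_) (sq_nonneg _)) _
  exact sq_birkhoffCoeff_le_succ hpos m (mem_Ico.1 hu).2

end Coefficients

section MeasIter

variable {Ω : Type*} [MeasurableSpace Ω] {T : Ω ≃ᵐ Ω}

theorem measIter_eq_zpow (i : ℤ) : measIter T i = ⇑(T.toEquiv ^ i) := by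
  rcases le_or_gt 0 i with hi | hi
  · lift i to ℕ using hi
    simp [measIter, ← Equiv.Perm.iterate_eq_pow]
  · obtain ⟨n, rfl⟩ : ∃ n : ℕ, i = -n := ⟨i.natAbs, by omega⟩
    rw [measIter, if_neg (by omega), neg_neg, Int.toNat_natCast, zpow_neg, zpow_natCast,
      ← inv_pow, ← Equiv.Perm.iterate_eq_pow]
    rfl

theorem measIter_natCast (n : ℕ) : measIter T n = (⇑T)^[n] := by
  simp [measIter]

theorem measIter_add_apply (i j : ℤ) (ω : Ω) :
    measIter T (i + j) ω = measIter T i (measIter T j ω) := by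
  simp only [measIter_eq_zpow, zpow_add, Equiv.Perm.mul_apply]

theorem measurePreserving_measIter {μ : Measure Ω} (hT : MeasurePreserving T μ μ) (i : ℤ) :
    MeasurePreserving (measIter T i) μ μ := by
  unfold measIter
  split_ifs
  · exact hT.iterate _
  · exact (hT.symm T).iterate _

end MeasIter

section Truncation

variable (a : ℕ → ℝ) (N : ℕ)

/-- The coefficient of `U^{-k} e` in `a₀ e - ∑_{i=1}^N a_i U^{-i} e`. -/
noncomputable def truncCoeff (k : ℤ) : ℝ :=
  if k = 0 then a 0 else if 0 < k ∧ k ≤ N then -a k.toNat else 0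

variable {a N}

theorem truncCoeff_eq_zero {k : ℤ} (hk : k ∉ Icc (0 : ℤ) N) : truncCoeff a N k = 0 := by
  rw [mem_Icc] at hk
  rw [truncCoeff, if_neg (by omega), if_neg (by omega)]

theorem truncCoeff_nonpos (ha : ∀ i, 1 ≤ i → 0 ≤ a i) {k : ℤ} (hk : 0 < k) :
    truncCoeff a N k ≤ 0 := by
  rw [truncCoeff, if_neg hk.ne']
  split_ifs
  · exact neg_nonpos.2 (ha _ (by omega))
  · rfl

theorem sub_sum_Icc_eq_sum_truncCoeff_mul (x : ℤ → ℝ) :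
    a 0 * x 0 - ∑ i ∈ Icc 1 N, a i * x i = ∑ k ∈ Icc (0 : ℤ) N, truncCoeff a N k * x k := by
  rw [← insert_Icc_add_one_left_eq_Icc (a := (0 : ℤ)) (by omega), sum_insert (by simp), zero_add,
    sub_eq_add_neg, ← sum_neg_distrib]
  congr 1
  refine sum_nbij' (↑) Int.toNat (fun i hi => ?_) (fun k hk => ?_) (fun i _ => Int.toNat_natCast i)
    (fun k hk => Int.toNat_of_nonneg ?_) (fun i hi => ?_) <;> simp only [mem_Icc] at *
  · omega
  · omega
  · omega
  · rw [truncCoeff, if_neg (by omega), if_pos (by omega), Int.toNat_natCast, neg_mul]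

end Truncation

theorem birkhoffSum_truncation_eq_sum_birkhoffCoeff_mul {Ω : Type*} [MeasurableSpace Ω]
    (T : Ω ≃ᵐ Ω) (e : Ω → ℝ) (a : ℕ → ℝ) (N m : ℕ) (ω : Ω) :
    birkhoffSum T (fun ω => a 0 * e ω - ∑ i ∈ Icc 1 N, a i * e (measIter T (-(i : ℤ)) ω)) m ω
      = ∑ u ∈ Ico (-N : ℤ) m, birkhoffCoeff (truncCoeff a N) m u * e (measIter T u ω) := by
  rw [← sum_range_sum_mul_eq_sum_birkhoffCoeff_mul (t := Icc 0 N) (fun u => e (measIter T u ω))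
    (fun k => truncCoeff_eq_zero) fun j hj k hk => by rw [mem_Icc] at hk; rw [mem_Ico]; omega]
  refine sum_congr rfl fun j _ => ?_
  rw [← sub_sum_Icc_eq_sum_truncCoeff_mul]
  simp [← measIter_natCast, ← measIter_add_apply, neg_add_eq_sub]

theorem stmt16_general {Ω : Type*} [MeasurableSpace Ω] (μ : Measure Ω)
    (T : Ω ≃ᵐ Ω) (hT : MeasurePreserving T μ μ)
    (e : Ω → ℝ) (he2 : MemLp e 2 μ)
    (hON : ∀ i j : ℤ, i ≠ j → ∫ ω, e (measIter T i ω) * e (measIter T j ω) ∂μ = 0)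
    (a : ℕ → ℝ) (hapos : ∀ i : ℕ, 1 ≤ i → 0 ≤ a i)
    (f : Ω → ℝ) (hf2 : MemLp f 2 μ)
    (hf : Tendsto (fun N : ℕ => eLpNorm
        (fun ω => f ω - (a 0 * e ω - ∑ i ∈ Finset.Icc 1 N, a i * e (measIter T (-(i : ℤ)) ω))) 2 μ)
      atTop (nhds 0)) :
    ∀ n : ℕ, 1 ≤ n →
      Real.sqrt (∫ ω, (∑ j ∈ Finset.range n, f (measIter T (j : ℤ) ω)) ^ 2 ∂μ)
        ≤ Real.sqrt (∫ ω, (∑ j ∈ Finset.range (n + 1), f (measIter T (j : ℤ) ω)) ^ 2 ∂μ) := by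
  intro n _
  set g : ℕ → Ω → ℝ := fun N ω => a 0 * e ω - ∑ i ∈ Icc 1 N, a i * e (measIter T (-(i : ℤ)) ω)
  have hE : ∀ u, MemLp (fun ω => e (measIter T u ω)) 2 μ :=
    fun u => he2.comp_measurePreserving (measurePreserving_measIter hT u)
  have hg : ∀ N, MemLp (g N) 2 μ :=
    fun N => (he2.const_mul _).sub (memLp_finsetSum _ fun i _ => (hE _).const_mul _)
  have hS : ∀ m N, ∫ ω, birkhoffSum T (g N) m ω ^ 2 ∂μ
      = (∑ u ∈ Ico (-N : ℤ) m, birkhoffCoeff (truncCoeff a N) m u ^ 2) * ∫ ω, e ω ^ 2 ∂μ := by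
    intro m N
    simp_rw [g, birkhoffSum_truncation_eq_sum_birkhoffCoeff_mul]
    rw [integral_sq_sum_mul_of_orthogonal hE hON, sum_mul]
    refine sum_congr rfl fun u _ => ?_
    rw [(measurePreserving_measIter hT u).integral_comp_of_aestronglyMeasurable
      (g := fun ω => e ω ^ 2) (he2.1.pow 2)]
  have hlim := tendsto_integral_sq_birkhoffSum hT hg hf2 hf
  have hsum : ∀ m ω, ∑ j ∈ range m, f (measIter T j ω) = birkhoffSum T f m ω := by
    simp [birkhoffSum, measIter_natCast]
  simp_rw [hsum]
  refine Real.sqrt_le_sqrt <| le_of_tendsto_of_tendsto' (hlim n) (hlim (n + 1)) fun N => ?_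
  rw [hS, hS]
  gcongr
  exact_mod_cast sum_sq_birkhoffCoeff_le_succ
    (fun k hk => truncCoeff_eq_zero (by rw [mem_Icc]; omega)) (fun k => truncCoeff_nonpos hapos) N n

/-- For `f = a₀ e - ∑_{i≥1} a_i U^{-i} e` with `a₀ = 1`, `a_i ≥ 0`, `∑_{i≥1} a_i = 1`,
the sequence `σ_n = ‖S_n(f)‖₂` is nondecreasing. -/
theorem stmt16 {Ω : Type*} [MeasurableSpace Ω] (μ : Measure Ω) [IsProbabilityMeasure μ]
    (T : Ω ≃ᵐ Ω) (hT : MeasurePreserving T μ μ)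
    (F : ℤ → MeasurableSpace Ω) (hFmono : Monotone F)
    (hFle : ∀ i, F i ≤ (inferInstance : MeasurableSpace Ω))
    (hFT : ∀ i : ℤ, F (i + 1) = (F i).comap T)
    (e : Ω → ℝ) (he2 : MemLp e 2 μ) (hemeas : StronglyMeasurable[F 0] e)
    (hmd : μ[e|F (-1)] =ᵐ[μ] 0) (hnorm : ∫ ω, (e ω) ^ 2 ∂μ = 1)
    (hON : ∀ i j : ℤ, i ≠ j → ∫ ω, e (measIter T i ω) * e (measIter T j ω) ∂μ = 0)
    (a : ℕ → ℝ) (ha0 : a 0 = 1) (hapos : ∀ i : ℕ, 1 ≤ i → 0 ≤ a i)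
    (hasum : HasSum (fun i : ℕ => a (i + 1)) 1)
    (f : Ω → ℝ) (hf2 : MemLp f 2 μ)
    (hf : Tendsto (fun N : ℕ => eLpNorm
        (fun ω => f ω - (a 0 * e ω - ∑ i ∈ Finset.Icc 1 N, a i * e (measIter T (-(i : ℤ)) ω))) 2 μ)
      atTop (nhds 0)) :
    ∀ n : ℕ, 1 ≤ n →
      Real.sqrt (∫ ω, (∑ j ∈ Finset.range n, f (measIter T (j : ℤ) ω)) ^ 2 ∂μ)
        ≤ Real.sqrt (∫ ω, (∑ j ∈ Finset.range (n + 1), f (measIter T (j : ℤ) ω)) ^ 2 ∂μ) :=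
  stmt16_general μ T hT e he2 hON a hapos f hf2 hf
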